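/- arXiv:2108.05820 — 2 statements merged into one kernel-verified Lean document; each statement's English description precedes it below -/
import Mathlib

section
/- The permutation digraph P(d,k) is k-geodetic: for any ordered pair of vertices (u,v) there is at most one directed path of length at most k from u to v. -/
/-- A vertex of the permutation digraph `P(d,k)`: a sequence of `k` pairwise
distinct symbols from the alphabet `{0,…,d+k-1}`. -/
def PermDigraphVertex (d k : ℕ) := {x : Fin k → Fin (d + k) // Function.Injective x}

/-- There is an arc from `x₀x₁…x_{k-1}` to `x₁…x_{k-1}x_k` whenever `x_k`
differs from all of `x₀,…,x_{k-1}`. -/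
def PermDigraphAdj (d k : ℕ) (u v : PermDigraphVertex d k) : Prop :=
  (∀ i j : Fin k, (j : ℕ) = (i : ℕ) + 1 → v.1 i = u.1 j) ∧
  (∀ i j : Fin k, (i : ℕ) = k - 1 → v.1 i ≠ u.1 j)

/-- A directed path (walk) of length at most `n` from `u` to `v` in `P(d,k)`,
recorded as the list of its vertices (so it has at most `n+1` vertices). -/
def PermDigraphWalkUpTo (d k n : ℕ) (u v : PermDigraphVertex d k)
    (l : List (PermDigraphVertex d k)) : Prop :=
  l.head? = some u ∧ l.getLast? = some v ∧ l.Chain' (PermDigraphAdj d k) ∧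
  l.length ≤ n + 1

/-!
Along a walk `w₀ → w₁ → ⋯ → wₙ` in `P(d,k)` every step shifts the word one place to the left,
so `w_q i = w_p (i + q - p)`. For `n ≤ k` this pins every vertex down: symbol `i` of `w_p` is
`u (i + p)` if `i + p < k` and `v (i + p - n)` otherwise. The length `n` is pinned down by the
first symbol of `v`: it is `u n` when `n < k`, while for `n = k` it is the symbol appended at the
first step, hence absent from `u`. So two walks of length `≤ k` from `u` to `v` coincide.
-/

section Chain

variable {d k : ℕ} {l : List (PermDigraphVertex d k)}

theorem chain_getElem_apply_of_eq_add (hc : l.IsChain (PermDigraphAdj d k)) {p q : ℕ}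
    (hpq : p ≤ q) (hq : q < l.length) {i j : Fin k} (hij : (j : ℕ) = i + (q - p)) :
    l[q].1 i = l[p].1 j := by
  induction q, hpq using Nat.le_induction generalizing i with
  | base => obtain rfl : j = i := Fin.ext (by omega); rfl
  | succ q hpq ih =>
    have hi : (i : ℕ) + 1 < k := by omega
    rw [(List.isChain_iff_getElem.1 hc q hq).1 i ⟨i + 1, hi⟩ rfl]
    exact ih (by omega) (by simp only; omega)

theorem chain_getElem_succ_apply_last_ne (hc : l.IsChain (PermDigraphAdj d k)) {p : ℕ}
    (hp : p + 1 < l.length) {i : Fin k} (hi : (i : ℕ) = k - 1) (j : Fin k) :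
    l[p + 1].1 i ≠ l[p].1 j :=
  (List.isChain_iff_getElem.1 hc p hp).2 i j hi

end Chain

namespace PermDigraphWalkUpTo

variable {d k n : ℕ} {u v : PermDigraphVertex d k} {l l₁ l₂ : List (PermDigraphVertex d k)}

theorem length_pos (hw : PermDigraphWalkUpTo d k n u v l) : 0 < l.length := by
  rcases l with _ | _
  · simp [PermDigraphWalkUpTo] at hw
  · simp

theorem isChain (hw : PermDigraphWalkUpTo d k n u v l) : l.IsChain (PermDigraphAdj d k) :=
  hw.2.2.1

theorem length_le (hw : PermDigraphWalkUpTo d k n u v l) : l.length ≤ n + 1 :=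
  hw.2.2.2

theorem getElem_zero (hw : PermDigraphWalkUpTo d k n u v l) (h : 0 < l.length) : l[0] = u := by
  obtain ⟨_, hu⟩ := List.getElem?_eq_some_iff.1 (List.head?_eq_getElem? ▸ hw.1)
  exact hu

theorem getElem_length_sub_one (hw : PermDigraphWalkUpTo d k n u v l)
    (h : l.length - 1 < l.length) : l[l.length - 1] = v := by
  obtain ⟨_, hv⟩ := List.getElem?_eq_some_iff.1 (List.getLast?_eq_getElem? ▸ hw.2.1)
  exact hv

theorem last_apply_zero (hw : PermDigraphWalkUpTo d k k u v l) (hk : 0 < k) :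
    (∃ h : l.length - 1 < k, v.1 ⟨0, hk⟩ = u.1 ⟨l.length - 1, h⟩) ∨
      (l.length - 1 = k ∧ ∀ j, v.1 ⟨0, hk⟩ ≠ u.1 j) := by
  have hpos := hw.length_pos
  have hc := hw.isChain
  have hlen := hw.length_le
  rw [← hw.getElem_zero hpos, ← hw.getElem_length_sub_one (by omega)]
  rcases Nat.lt_or_ge (l.length - 1) k with hlt | hge
  · exact .inl ⟨hlt, chain_getElem_apply_of_eq_add hc (Nat.zero_le _) _ (by simp)⟩
  · refine .inr ⟨by omega, fun j => ?_⟩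
    rw [chain_getElem_apply_of_eq_add (i := ⟨0, hk⟩) (j := ⟨k - 1, by omega⟩) hc
      (p := 1) (by omega) (by omega) (by simp only; omega)]
    exact chain_getElem_succ_apply_last_ne hc (p := 0) (by omega) rfl j

theorem length_eq (h₁ : PermDigraphWalkUpTo d k k u v l₁)
    (h₂ : PermDigraphWalkUpTo d k k u v l₂) : l₁.length = l₂.length := by
  have hpos₁ := h₁.length_pos
  have hpos₂ := h₂.length_pos
  rcases Nat.eq_zero_or_pos k with rfl | hk
  · have := h₁.length_le; have := h₂.length_le; omega
  rcases h₁.last_apply_zero hk with ⟨hlt₁, hv₁⟩ | ⟨heq₁, hv₁⟩ <;>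
    rcases h₂.last_apply_zero hk with ⟨hlt₂, hv₂⟩ | ⟨heq₂, hv₂⟩
  · have := Fin.mk.inj_iff.1 (u.2 (hv₁.symm.trans hv₂))
    omega
  · exact absurd hv₁ (hv₂ _)
  · exact absurd hv₂ (hv₁ _)
  · omega

theorem getElem_eq (h₁ : PermDigraphWalkUpTo d k k u v l₁)
    (h₂ : PermDigraphWalkUpTo d k k u v l₂) (p : ℕ) (hp₁ : p < l₁.length)
    (hp₂ : p < l₂.length) : l₁[p] = l₂[p] := by
  have hlen := h₁.length_eq h₂
  have hc₁ := h₁.isChain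
  have hc₂ := h₂.isChain
  have hk₁ := h₁.length_le
  refine Subtype.ext (funext fun i => ?_)
  by_cases hi : (i : ℕ) + p < k
  · rw [chain_getElem_apply_of_eq_add hc₁ (Nat.zero_le p) hp₁ (j := ⟨i + p, hi⟩) (by simp),
      chain_getElem_apply_of_eq_add hc₂ (Nat.zero_le p) hp₂ (j := ⟨i + p, hi⟩) (by simp),
      h₁.getElem_zero, h₂.getElem_zero]
  · have hj : (i : ℕ) + p - (l₁.length - 1) < k := by omega
    rw [← chain_getElem_apply_of_eq_add hc₁ (p := p) (q := l₁.length - 1) (by omega) (by omega)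
        (i := ⟨i + p - (l₁.length - 1), hj⟩) (by simp only; omega),
      ← chain_getElem_apply_of_eq_add hc₂ (p := p) (q := l₂.length - 1) (by omega) (by omega)
        (i := ⟨i + p - (l₁.length - 1), hj⟩) (by simp only; omega),
      h₁.getElem_length_sub_one, h₂.getElem_length_sub_one]

end PermDigraphWalkUpTo

theorem permDigraph_kGeodetic_general (d k : ℕ) :
    ∀ (u v : PermDigraphVertex d k) (l₁ l₂ : List (PermDigraphVertex d k)),
      PermDigraphWalkUpTo d k k u v l₁ → PermDigraphWalkUpTo d k k u v l₂ →
      l₁ = l₂ :=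
  fun _ _ _ _ h₁ h₂ => List.ext_getElem (h₁.length_eq h₂) (h₁.getElem_eq h₂)

/-- P(d,k) is k-geodetic: for any ordered pair of vertices `(u,v)` there is at
most one directed path of length at most `k` from `u` to `v`. -/
theorem permDigraph_kGeodetic (d k : ℕ) (hd : 2 ≤ d) (hk : 2 ≤ k) :
    ∀ (u v : PermDigraphVertex d k) (l₁ l₂ : List (PermDigraphVertex d k)),
      PermDigraphWalkUpTo d k k u v l₁ → PermDigraphWalkUpTo d k k u v l₂ →
      l₁ = l₂ :=
  permDigraph_kGeodetic_general d k
end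

section
/- The permutation digraph P(d,k) contains a directed cycle of length k+1, and hence its geodetic girth is exactly k. -/
/-- `m`-geodecity of P(d,k): at most one directed path of length ≤ m between
any ordered pair of vertices. -/
def PermDigraphGeodetic (d k m : ℕ) : Prop :=
  ∀ (u v : PermDigraphVertex d k) (l₁ l₂ : List (PermDigraphVertex d k)),
    PermDigraphWalkUpTo d k m u v l₁ → PermDigraphWalkUpTo d k m u v l₂ → l₁ = l₂

/-!
Along a walk in `P(d,k)` every step shifts the word one place to the left and appends a fresh
symbol, so after `n ≤ k` steps from `u` the first symbol of the endpoint is `u n` if `n < k` and a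
symbol outside `u` if `n = k`. Hence the endpoints of a walk of length `≤ k` determine its length,
and then every vertex on it, which is a window of `u` followed by the endpoint. On the other hand
the `k + 1` cyclic windows of length `k` of `0, 1, …, k` form a `(k+1)`-cycle, a second closed
walk of length `≤ k + 1` besides the trivial one.
-/

theorem PermDigraphWalkUpTo.exists_getElem {d k m : ℕ} {u v : PermDigraphVertex d k}
    {l : List (PermDigraphVertex d k)} (h : PermDigraphWalkUpTo d k m u v l) :
    ∃ n ≤ m, ∃ hn : l.length = n + 1, l[0] = u ∧ l[n] = v := by
  obtain ⟨hu, hv, -, hlen⟩ := h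
  rw [List.head?_eq_getElem?, List.getElem?_eq_some_iff] at hu
  rw [List.getLast?_eq_getElem?, List.getElem?_eq_some_iff] at hv
  obtain ⟨hl, hu⟩ := hu
  obtain ⟨_, hv⟩ := hv
  exact ⟨l.length - 1, by omega, by omega, hu, hv⟩

namespace PermDigraph

variable {d k : ℕ}

theorem getElem_apply_eq_of_isChain {l : List (PermDigraphVertex d k)}
    (hc : l.IsChain (PermDigraphAdj d k)) {a b : ℕ} (hab : a ≤ b) (hb : b < l.length)
    (i j : Fin k) (hij : (j : ℕ) = i + (b - a)) : l[b].1 i = l[a].1 j := by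
  induction b, hab using Nat.le_induction generalizing i j with
  | base => obtain rfl : j = i := Fin.ext (by omega); rfl
  | succ b hab ih =>
    have hi : (i : ℕ) + 1 < k := by omega
    rw [(hc.getElem b hb).1 i ⟨i + 1, hi⟩ rfl]
    exact ih (by omega) _ _ (by simp only; omega)

theorem getElem_apply_zero_ne_of_isChain {l : List (PermDigraphVertex d k)}
    (hc : l.IsChain (PermDigraphAdj d k)) (hk : 0 < k) (hl : k < l.length) (j : Fin k) :
    l[k].1 ⟨0, hk⟩ ≠ l[0].1 j := by
  rw [getElem_apply_eq_of_isChain hc (a := 1) hk hl ⟨0, hk⟩ ⟨k - 1, by omega⟩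
    (by simp only; omega)]
  exact (hc.getElem 0 (by omega)).2 _ j rfl

theorem getElem_ne_of_isChain_of_lt {l₁ l₂ : List (PermDigraphVertex d k)}
    (hc₁ : l₁.IsChain (PermDigraphAdj d k)) (hc₂ : l₂.IsChain (PermDigraphAdj d k))
    {n₁ n₂ : ℕ} (hn₁ : n₁ < l₁.length) (hn₂ : n₂ < l₂.length) (hlt : n₁ < n₂) (hn₂k : n₂ ≤ k)
    (h0 : l₁[0] = l₂[0]) : l₁[n₁] ≠ l₂[n₂] := by
  intro h
  have hk : 0 < k := by omega
  have e₁ : l₁[n₁].1 ⟨0, hk⟩ = l₂[0].1 ⟨n₁, by omega⟩ := by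
    rw [← h0]; exact getElem_apply_eq_of_isChain hc₁ n₁.zero_le hn₁ _ _ (by simp)
  rcases hn₂k.lt_or_eq with hn₂k | rfl
  · have e₂ : l₂[n₂].1 ⟨0, hk⟩ = l₂[0].1 ⟨n₂, hn₂k⟩ :=
      getElem_apply_eq_of_isChain hc₂ n₂.zero_le hn₂ _ _ (by simp)
    rw [h, e₂] at e₁
    have := Fin.val_eq_of_eq (l₂[0].2 e₁)
    simp only at this
    omega
  · exact getElem_apply_zero_ne_of_isChain hc₂ hk hn₂ _ (h ▸ e₁)

theorem getElem_apply_of_isChain {l : List (PermDigraphVertex d k)}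
    (hc : l.IsChain (PermDigraphAdj d k)) {n : ℕ} (hn : l.length = n + 1) (hnk : n ≤ k)
    (s : ℕ) (hs : s < l.length) (i : Fin k) :
    l[s].1 i = if h : i + s < k then l[0].1 ⟨i + s, h⟩
      else l[n].1 ⟨i - (n - s), by omega⟩ := by
  split_ifs with h
  · exact getElem_apply_eq_of_isChain hc s.zero_le hs _ _ (by simp)
  · exact (getElem_apply_eq_of_isChain hc (b := n) (by omega) (by omega) _ _
      (by simp only; omega)).symm

theorem eq_of_isChain_of_endpoints {l₁ l₂ : List (PermDigraphVertex d k)}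
    (hc₁ : l₁.IsChain (PermDigraphAdj d k)) (hc₂ : l₂.IsChain (PermDigraphAdj d k))
    {n : ℕ} (hn₁ : l₁.length = n + 1) (hn₂ : l₂.length = n + 1) (hnk : n ≤ k)
    (h0 : l₁[0] = l₂[0]) (hn : l₁[n] = l₂[n]) : l₁ = l₂ := by
  refine List.ext_getElem (hn₁.trans hn₂.symm) fun s hs₁ hs₂ => Subtype.ext (funext fun i => ?_)
  rw [getElem_apply_of_isChain hc₁ hn₁ hnk, getElem_apply_of_isChain hc₂ hn₂ hnk, h0, hn]

theorem geodetic_self : PermDigraphGeodetic d k k := by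
  intro u v l₁ l₂ h₁ h₂
  obtain ⟨n₁, hn₁k, hn₁, hu₁, hv₁⟩ := h₁.exists_getElem
  obtain ⟨n₂, hn₂k, hn₂, hu₂, hv₂⟩ := h₂.exists_getElem
  have h0 : l₁[0] = l₂[0] := hu₁.trans hu₂.symm
  obtain rfl : n₁ = n₂ := by
    by_contra hne
    rcases Nat.lt_or_gt_of_ne hne with hlt | hlt
    · exact getElem_ne_of_isChain_of_lt h₁.2.2.1 h₂.2.2.1 _ _ hlt hn₂k h0
        (hv₁.trans hv₂.symm)
    · exact getElem_ne_of_isChain_of_lt h₂.2.2.1 h₁.2.2.1 _ _ hlt hn₁k h0.symm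
        (hv₂.trans hv₁.symm)
  exact eq_of_isChain_of_endpoints h₁.2.2.1 h₂.2.2.1 hn₁ hn₂ hn₁k h0 (hv₁.trans hv₂.symm)

theorem not_geodetic_of_closed_walk {m : ℕ} {u : PermDigraphVertex d k}
    {l : List (PermDigraphVertex d k)} (h : PermDigraphWalkUpTo d k m u u l)
    (hl : 2 ≤ l.length) : ¬ PermDigraphGeodetic d k m := fun hgeo => by
  have := hgeo u u [u] l ⟨rfl, rfl, List.isChain_singleton u, by simp⟩ h
  grind

def cycleVertex (k : ℕ) (hd : 1 ≤ d) (t : ℕ) : PermDigraphVertex d k :=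
  ⟨fun i => ⟨(t + i) % (k + 1), by
    have : (t + i) % (k + 1) < k + 1 := Nat.mod_lt _ k.succ_pos
    omega⟩,
    fun i j h => Fin.ext <| Nat.ModEq.eq_of_lt_of_lt
      (Nat.ModEq.add_left_cancel' t (Fin.val_eq_of_eq h)) (by omega) (by omega)⟩

theorem cycleVertex_adj (hd : 1 ≤ d) (t : ℕ) :
    PermDigraphAdj d k (cycleVertex k hd t) (cycleVertex k hd (t + 1)) := by
  refine ⟨fun i j hij => Fin.ext ?_, fun i j hi h => ?_⟩
  · change (t + 1 + i) % (k + 1) = (t + j) % (k + 1)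
    congr 1
    omega
  · have h' : t + k ≡ t + j [MOD k + 1] := by
      have h := Fin.val_eq_of_eq h
      change (t + 1 + i) % (k + 1) = (t + j) % (k + 1) at h
      rwa [show t + 1 + i = t + k by omega] at h
    have := Nat.ModEq.eq_of_lt_of_lt (Nat.ModEq.add_left_cancel' t h') (by omega) (by omega)
    omega

theorem cycleVertex_add_self (hd : 1 ≤ d) (t : ℕ) :
    cycleVertex k hd (t + (k + 1)) = cycleVertex k hd t :=
  Subtype.ext <| funext fun i => Fin.ext <| by
    change (t + (k + 1) + i) % (k + 1) = (t + i) % (k + 1)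
    rw [Nat.add_right_comm, Nat.add_mod_right]

theorem cycleVertex_injOn (hk : 0 < k) (hd : 1 ≤ d) :
    Set.InjOn (cycleVertex k hd) (Set.Iio (k + 1)) := fun t ht t' ht' h => by
  have := Fin.val_eq_of_eq (congrArg (fun x : PermDigraphVertex d k => x.1 ⟨0, hk⟩) h)
  change (t + 0) % (k + 1) = (t' + 0) % (k + 1) at this
  rwa [Nat.mod_eq_of_lt (by simpa using ht), Nat.mod_eq_of_lt (by simpa using ht')] at this

def cycle (k : ℕ) (hd : 1 ≤ d) : List (PermDigraphVertex d k) :=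
  (List.range (k + 2)).map (cycleVertex k hd)

theorem length_cycle (hd : 1 ≤ d) : (cycle k hd).length = k + 2 := by
  simp [cycle]

theorem head?_cycle (hd : 1 ≤ d) : (cycle k hd).head? = some (cycleVertex k hd 0) := by
  simp [cycle, List.head?_range]

theorem getLast?_cycle (hd : 1 ≤ d) : (cycle k hd).getLast? = some (cycleVertex k hd 0) := by
  simpa [cycle, List.getLast?_range] using cycleVertex_add_self hd 0

theorem isChain_cycle (hd : 1 ≤ d) : (cycle k hd).IsChain (PermDigraphAdj d k) :=
  (List.isChain_map _).2 <| (List.isChain_range_succ _ _).2 fun t _ => cycleVertex_adj hd t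

theorem nodup_dropLast_cycle (hk : 0 < k) (hd : 1 ≤ d) : (cycle k hd).dropLast.Nodup := by
  rw [cycle, ← List.map_dropLast, List.range_succ, List.dropLast_concat]
  exact List.nodup_range.map_on fun t ht t' ht' =>
    cycleVertex_injOn hk hd (by simpa using ht) (by simpa using ht')

theorem walkUpTo_cycle (hd : 1 ≤ d) :
    PermDigraphWalkUpTo d k (k + 1) (cycleVertex k hd 0) (cycleVertex k hd 0) (cycle k hd) :=
  ⟨head?_cycle hd, getLast?_cycle hd, isChain_cycle hd, (length_cycle hd).le⟩

end PermDigraph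

/-- P(d,k) contains a directed cycle of length `k+1`, and hence its geodetic
girth is exactly `k`: it is `k`-geodetic but not `(k+1)`-geodetic. -/
theorem permDigraph_geodetic_girth (d k : ℕ) (hd : 2 ≤ d) (hk : 2 ≤ k) :
    (∃ (u : PermDigraphVertex d k) (l : List (PermDigraphVertex d k)),
      l.head? = some u ∧ l.getLast? = some u ∧ l.Chain' (PermDigraphAdj d k) ∧
      l.length = k + 2 ∧ l.dropLast.Nodup) ∧
    PermDigraphGeodetic d k k ∧ ¬ PermDigraphGeodetic d k (k + 1) := by
  have hd₁ : 1 ≤ d := by omega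
  have hcycle := PermDigraph.walkUpTo_cycle (k := k) hd₁
  refine ⟨⟨_, _, hcycle.1, hcycle.2.1, hcycle.2.2.1, PermDigraph.length_cycle hd₁,
    PermDigraph.nodup_dropLast_cycle (by omega) hd₁⟩, PermDigraph.geodetic_self, ?_⟩
  exact PermDigraph.not_geodetic_of_closed_walk hcycle (by rw [PermDigraph.length_cycle]; omega)
end
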